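/- Let a_n denote the number of permutations of [n] avoiding all of 321, 2413, and 3142. Then a_n satisfies a_n = 3a_{n-1} − 2a_{n-2} + a_{n-3} for n ≥ 4, with a_1 = 1, a_2 = 2, a_3 = 5. -/

import Mathlib

/-- `π` is (the one-line notation of) a permutation of `{1,…,n}`. -/
def IsPermList (n : ℕ) (π : List ℕ) : Prop := π.Perm (List.range' 1 n)

/-- Two sequences are order-isomorphic. -/
def OrdIso (u v : List ℕ) : Prop :=
  u.length = v.length ∧
    ∀ i j : ℕ, i < u.length → j < u.length → (u[i]! < u[j]! ↔ v[i]! < v[j]!)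

/-- `π` contains the pattern `σ`: some subsequence of `π` is order-isomorphic to `σ`. -/
def ContainsPat (π σ : List ℕ) : Prop := ∃ t : List ℕ, t.Sublist π ∧ OrdIso t σ

/-- `π` avoids the pattern `σ`. -/
def AvoidsPat (π σ : List ℕ) : Prop := ¬ ContainsPat π σ

/-- Direct sum of permutations in one-line notation. -/
def dsumL (x y : List ℕ) : List ℕ := x ++ y.map (· + x.length)

/-- Skew sum of permutations in one-line notation. -/
def ssumL (x y : List ℕ) : List ℕ := x.map (· + y.length) ++ y

/-- The identity permutation of size `r` in one-line notation. -/
def idL (r : ℕ) : List ℕ := List.range' 1 r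

/-- `π` avoids all of the patterns 321, 2413 and 3142. -/
def AvoidsAll (π : List ℕ) : Prop :=
  AvoidsPat π [3, 2, 1] ∧ AvoidsPat π [2, 4, 1, 3] ∧ AvoidsPat π [3, 1, 4, 2]


/-!
The three patterns are sum-indecomposable, so the class is closed under direct sums and
`π ∈ Av_{j+1}` splits as its first sum-component followed by a shifted member of the class.
Reading `π` around its entry `1`: the entries before it increase (321) and form an interval
`s+1, …, s+r` (2413), and after it come `2, …, s` in increasing order (321) before anything
larger (3142). So `π = (12⋯r ⊖ 12⋯s) ⊕ ρ` uniquely, with first component `1` or one of the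
`m - 1` permutations `12⋯r ⊖ 12⋯s` (`r, s ≥ 1`) of each size `m ≥ 2`. This gives
`a_{j+1} = a_j + ∑_{k<j} (j - k) a_k`, and differencing this twice gives the recurrence.
-/

section

open List

lemma ordIso_map_add_iff {t σ : List ℕ} (m : ℕ) : OrdIso (t.map (· + m)) σ ↔ OrdIso t σ := by
  unfold OrdIso
  refine and_congr (by rw [length_map]) (forall_congr' fun i => forall_congr' fun j => ?_)
  rw [length_map]
  refine imp_congr_right fun hi => imp_congr_right fun hj => ?_
  simp [getElem!_pos, hi, hj]

lemma containsPat_map_add_iff {π σ : List ℕ} (m : ℕ) :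
    ContainsPat (π.map (· + m)) σ ↔ ContainsPat π σ := by
  constructor
  · rintro ⟨t, ht, hiso⟩
    obtain ⟨t', ht', rfl⟩ := sublist_map_iff.mp ht
    exact ⟨t', ht', (ordIso_map_add_iff m).mp hiso⟩
  · rintro ⟨t, ht, hiso⟩
    exact ⟨t.map (· + m), ht.map _, (ordIso_map_add_iff m).mpr hiso⟩

lemma ContainsPat.mono {π π' σ : List ℕ} (h : π <+ π') : ContainsPat π σ → ContainsPat π' σ
  | ⟨t, ht, hiso⟩ => ⟨t, ht.trans h, hiso⟩

lemma AvoidsAll.sublist {π π' : List ℕ} (h : π <+ π') (h' : AvoidsAll π') : AvoidsAll π :=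
  ⟨mt (ContainsPat.mono h) h'.1, mt (ContainsPat.mono h) h'.2.1, mt (ContainsPat.mono h) h'.2.2⟩

lemma avoidsAll_map_add_iff {π : List ℕ} (m : ℕ) : AvoidsAll (π.map (· + m)) ↔ AvoidsAll π := by
  simp only [AvoidsAll, AvoidsPat, containsPat_map_add_iff]

lemma containsPat_321_iff {π : List ℕ} :
    ContainsPat π [3, 2, 1] ↔ ∃ a b c, a < b ∧ b < c ∧ [c, b, a] <+ π := by
  constructor
  · rintro ⟨t, ht, hlen, hiso⟩
    obtain ⟨x, y, z, rfl⟩ := length_eq_three.mp (by simpa using hlen)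
    have hyx : y < x := by simpa using (hiso 1 0 (by simp) (by simp)).mpr (by simp)
    have hzy : z < y := by simpa using (hiso 2 1 (by simp) (by simp)).mpr (by simp)
    exact ⟨z, y, x, hzy, hyx, ht⟩
  · rintro ⟨a, b, c, hab, hbc, ht⟩
    refine ⟨[c, b, a], ht, rfl, fun i j hi hj => ?_⟩
    simp only [length_cons, length_nil] at hi hj
    interval_cases i <;> interval_cases j <;> simp <;> omega

lemma containsPat_2413_iff {π : List ℕ} :
    ContainsPat π [2, 4, 1, 3] ↔ ∃ a b c d, a < b ∧ b < c ∧ c < d ∧ [b, d, a, c] <+ π := by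
  constructor
  · rintro ⟨t, ht, hlen, hiso⟩
    obtain ⟨w, x, y, z, rfl⟩ := length_eq_four.mp (by simpa using hlen)
    have hyw : y < w := by simpa using (hiso 2 0 (by simp) (by simp)).mpr (by simp)
    have hwz : w < z := by simpa using (hiso 0 3 (by simp) (by simp)).mpr (by simp)
    have hzx : z < x := by simpa using (hiso 3 1 (by simp) (by simp)).mpr (by simp)
    exact ⟨y, w, z, x, hyw, hwz, hzx, ht⟩
  · rintro ⟨a, b, c, d, hab, hbc, hcd, ht⟩
    refine ⟨[b, d, a, c], ht, rfl, fun i j hi hj => ?_⟩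
    simp only [length_cons, length_nil] at hi hj
    interval_cases i <;> interval_cases j <;> simp <;> omega

lemma containsPat_3142_iff {π : List ℕ} :
    ContainsPat π [3, 1, 4, 2] ↔ ∃ a b c d, a < b ∧ b < c ∧ c < d ∧ [c, a, d, b] <+ π := by
  constructor
  · rintro ⟨t, ht, hlen, hiso⟩
    obtain ⟨w, x, y, z, rfl⟩ := length_eq_four.mp (by simpa using hlen)
    have hxz : x < z := by simpa using (hiso 1 3 (by simp) (by simp)).mpr (by simp)
    have hzw : z < w := by simpa using (hiso 3 0 (by simp) (by simp)).mpr (by simp)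
    have hwy : w < y := by simpa using (hiso 0 2 (by simp) (by simp)).mpr (by simp)
    exact ⟨x, z, w, y, hxz, hzw, hwy, ht⟩
  · rintro ⟨a, b, c, d, hab, hbc, hcd, ht⟩
    refine ⟨[c, a, d, b], ht, rfl, fun i j hi hj => ?_⟩
    simp only [length_cons, length_nil] at hi hj
    interval_cases i <;> interval_cases j <;> simp <;> omega

lemma map_add_range'_right (m a n : ℕ) : (range' a n).map (· + m) = range' (a + m) n := by
  simpa [add_comm] using map_add_range' (a := m) a n 1

lemma map_add_map_sub {m : ℕ} {l : List ℕ} (h : ∀ x ∈ l, m ≤ x) :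
    (l.map (· - m)).map (· + m) = l := by
  rw [map_map]
  conv_rhs => rw [← map_id l]
  exact map_congr_left fun x hx => Nat.sub_add_cancel (h x hx)

lemma pair_sublist_append {u v : ℕ} {l₁ l₂ : List ℕ} (h : [u, v] <+ l₁ ++ l₂) :
    [u, v] <+ l₁ ∨ (u ∈ l₁ ∧ v ∈ l₂) ∨ [u, v] <+ l₂ := by
  obtain ⟨t₁, t₂, ht, h₁, h₂⟩ := sublist_append_iff.mp h
  rcases t₁ with _ | ⟨x, _ | ⟨y, _ | ⟨z, t₁⟩⟩⟩
  · simp_all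
  · simp only [cons_append, nil_append, cons.injEq] at ht
    obtain ⟨rfl, rfl⟩ := ht
    exact Or.inr (Or.inl ⟨h₁.subset (by simp), h₂.subset (by simp)⟩)
  · simp only [cons_append, nil_append, cons.injEq] at ht
    obtain ⟨rfl, rfl, -⟩ := ht
    exact Or.inl h₁
  · simp at ht

lemma pair_sublist_range' {u v a n : ℕ} (h : [u, v] <+ range' a n) :
    a ≤ u ∧ u < v ∧ v < a + n := by
  have hu := mem_range'_1.mp (h.subset (mem_cons_self ..))
  have hv := mem_range'_1.mp (h.subset (by simp : v ∈ [u, v]))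
  exact ⟨hu.1, pairwise_iff_forall_sublist.mp (pairwise_lt_range' 1) h, hv.2⟩

lemma eq_range'_of_pairwise_lt_of_mem_iff {l : List ℕ} {a n : ℕ} (hl : l.Pairwise (· < ·))
    (h : ∀ x, x ∈ l ↔ a ≤ x ∧ x < a + n) : l = range' a n := by
  refine Subset.antisymm_of_pairwise hl (pairwise_lt_range' 1) (fun x hx => ?_) (fun x hx => ?_)
  · exact mem_range'_1.mpr ((h x).mp hx)
  · exact (h x).mpr (mem_range'_1.mp hx)

lemma cons_eq_range'_of_pairwise_lt {a : ℕ} {l : List ℕ} (hl : (a :: l).Pairwise (· < ·))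
    (h : ∀ u v, v ∈ l → a < u → u < v → u ∈ l) : a :: l = range' a (l.length + 1) := by
  induction l generalizing a with
  | nil => rfl
  | cons b l ih =>
    obtain ⟨hab, hb⟩ := pairwise_cons.mp hl
    have hab : a < b := hab b (mem_cons_self ..)
    have hb' : ∀ x ∈ l, b < x := (pairwise_cons.mp hb).1
    obtain rfl : b = a + 1 := by
      by_contra hne
      rcases mem_cons.mp (h (a + 1) b (mem_cons_self ..) (by omega) (by omega)) with h' | h'
      · omega
      · exact absurd (hb' _ h') (by omega)
    rw [length_cons, range'_succ, ← ih hb fun u v hv hu huv => ?_]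
    rcases mem_cons.mp (h u v (mem_cons_of_mem _ hv) (by omega) huv) with rfl | h'
    · omega
    · exact h'

lemma not_of_mem_dropWhile {α : Type*} {p : α → Bool} {l : List α}
    (h : ∀ u v, [u, v] <+ l → p v → p u) : ∀ x ∈ l.dropWhile p, ¬ p x := by
  induction l with
  | nil => simp
  | cons y l ih =>
    by_cases hy : p y
    · rw [dropWhile_cons_of_pos hy]
      exact ih fun u v huv => h u v (huv.cons y)
    · rw [dropWhile_cons_of_neg hy]
      intro x hx hpx
      rcases mem_cons.mp hx with rfl | hx
      · exact hy hpx
      · exact hy (h y x (.cons_cons y (singleton_sublist.mpr hx)) hpx)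

lemma exists_eq_range'_append {C : List ℕ} {a m : ℕ}
    (hmem : ∀ x ∈ C, x < a + m → a ≤ x) (hcover : ∀ x, a ≤ x → x < a + m → x ∈ C)
    (hfirst : ∀ u v, [u, v] <+ C → v < a + m → u < a + m)
    (hincr : ∀ u v, [u, v] <+ C → u < a + m → u < v) :
    ∃ D, C = range' a m ++ D ∧ ∀ x ∈ D, a + m ≤ x := by
  have hD : ∀ x ∈ C.dropWhile (· < a + m), a + m ≤ x := fun x hx => by
    simpa using not_of_mem_dropWhile (p := (· < a + m)) (by simpa using hfirst) x hx
  refine ⟨C.dropWhile (· < a + m), ?_, hD⟩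
  conv_lhs => rw [← takeWhile_append_dropWhile (p := (· < a + m)) (l := C)]
  congr 1
  refine eq_range'_of_pairwise_lt_of_mem_iff ?_ fun x => ⟨fun hx => ?_, fun hx => ?_⟩
  · refine pairwise_iff_forall_sublist.mpr fun {u v} huv =>
      hincr u v (huv.trans (takeWhile_sublist _)) ?_
    simpa using mem_takeWhile_imp (huv.subset (mem_cons_self ..))
  · have hx' : x < a + m := by simpa using mem_takeWhile_imp hx
    exact ⟨hmem x ((takeWhile_sublist _).subset hx) hx', hx'⟩
  · have hxC := hcover x hx.1 hx.2
    rw [← takeWhile_append_dropWhile (p := (· < a + m)) (l := C), mem_append] at hxC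
    exact hxC.resolve_right fun h => by have := hD x h; omega

section IsPermList

variable {n : ℕ} {π A C : List ℕ}

lemma IsPermList.nodup (hπ : IsPermList n π) : π.Nodup :=
  hπ.nodup_iff.mpr nodup_range'

lemma IsPermList.mem_iff (hπ : IsPermList n π) {x : ℕ} : x ∈ π ↔ 0 < x ∧ x ≤ n := by
  rw [List.Perm.mem_iff hπ, mem_range'_1]
  omega

lemma IsPermList.pos (hπ : IsPermList n π) : ∀ x ∈ π, 0 < x :=
  fun _ hx => (hπ.mem_iff.mp hx).1

lemma IsPermList.one_notMem_left (hπ : IsPermList n (A ++ 1 :: C)) : 1 ∉ A := fun h =>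
  (nodup_append.mp hπ.nodup).2.2 1 h 1 (mem_cons_self ..) rfl

end IsPermList

def blockSum (r s : ℕ) (ρ : List ℕ) : List ℕ := dsumL (ssumL (idL r) (idL s)) ρ

lemma blockSum_eq (r s : ℕ) (ρ : List ℕ) :
    blockSum r s ρ = range' (s + 1) r ++ range' 1 s ++ ρ.map (· + (r + s)) := by
  simp only [blockSum, dsumL, ssumL, idL, map_add_range'_right, length_append,
    length_range', append_assoc, add_comm 1 s]

lemma blockSum_eq_append_one_cons {r s : ℕ} (hs : 0 < s) (ρ : List ℕ) :
    blockSum r s ρ = range' (s + 1) r ++ 1 :: (range' 2 (s - 1) ++ ρ.map (· + (r + s))) := by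
  obtain ⟨s, rfl⟩ := Nat.exists_eq_add_of_lt hs
  simp [blockSum_eq, range'_succ]

lemma blockSum_map_sub {r s : ℕ} {D : List ℕ} (hs : 0 < s) (hD : ∀ x ∈ D, r + s ≤ x) :
    blockSum r s (D.map (· - (r + s))) = range' (s + 1) r ++ 1 :: (range' 2 (s - 1) ++ D) := by
  rw [blockSum_eq_append_one_cons hs, map_add_map_sub hD]

lemma isPermList_blockSum_iff {r s k : ℕ} {ρ : List ℕ} :
    IsPermList (r + s + k) (blockSum r s ρ) ↔ IsPermList k ρ := by
  have hblock : blockSum r s ρ ~ range' 1 (r + s) ++ ρ.map (· + (r + s)) := by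
    rw [blockSum_eq, ← add_comm s r, ← range'_append_1, add_comm 1 s]
    exact perm_append_comm.append_right _
  have hall : range' 1 (r + s + k) = range' 1 (r + s) ++ (range' 1 k).map (· + (r + s)) := by
    rw [map_add_range'_right, ← range'_append_1 (m := r + s) (n := k), add_comm 1 (r + s)]
  rw [IsPermList, IsPermList, hall]
  constructor
  · intro h
    exact (map_perm_map_iff (add_left_injective _)).mp
      ((perm_append_left_iff _).mp (hblock.symm.trans h))
  · exact fun h => hblock.trans ((perm_append_left_iff _).mpr (h.map _))

lemma pair_sublist_blockSum {r s u v : ℕ} {ρ : List ℕ} (hρ : ∀ x ∈ ρ, 0 < x)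
    (h : [u, v] <+ blockSum r s ρ) :
    (s < u ∧ u < v ∧ v ≤ r + s) ∨ (u < v ∧ v ≤ s) ∨ (s < u ∧ u ≤ r + s ∧ v ≤ s) ∨
      (u ≤ r + s ∧ r + s < v) ∨ (r + s < u ∧ r + s < v) := by
  have hshift : ∀ x ∈ ρ.map (· + (r + s)), r + s < x := by
    simp only [mem_map]
    rintro _ ⟨x, hx, rfl⟩
    have := hρ x hx
    omega
  rw [blockSum_eq] at h
  rcases pair_sublist_append h with h | ⟨hu, hv⟩ | h
  · rcases pair_sublist_append h with h | ⟨hu, hv⟩ | h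
    · have := pair_sublist_range' h
      omega
    · rw [mem_range'_1] at hu hv
      omega
    · have := pair_sublist_range' h
      omega
  · have := hshift v hv
    simp only [mem_append, mem_range'_1] at hu
    omega
  · have := hshift u (h.subset (by simp))
    have := hshift v (h.subset (by simp))
    omega

lemma sublist_map_add_of_sublist_blockSum {r s : ℕ} {t ρ : List ℕ} (h : t <+ blockSum r s ρ)
    (ht : ∀ x ∈ t, r + s < x) : t <+ ρ.map (· + (r + s)) := by
  rw [blockSum_eq] at h
  refine h.of_sublist_append_right fun x hx hmem => ?_
  have := ht x hx
  simp only [mem_append, mem_range'_1] at hmem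
  omega

/-- An occurrence whose smallest entry exceeds `r + s` lies in the `ρ` part; otherwise a few of
its pairs of entries already contradict the shape of `blockSum r s ρ`. -/
lemma avoidsAll_blockSum {ρ : List ℕ} (hρ : AvoidsAll ρ) (hpos : ∀ x ∈ ρ, 0 < x) (r s : ℕ) :
    AvoidsAll (blockSum r s ρ) := by
  obtain ⟨h321, h2413, h3142⟩ := (avoidsAll_map_add_iff (r + s)).mpr hρ
  refine ⟨fun h => ?_, fun h => ?_, fun h => ?_⟩
  · obtain ⟨a, b, c, hab, hbc, ht⟩ := containsPat_321_iff.mp h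
    by_cases ha : r + s < a
    · refine h321 (containsPat_321_iff.mpr ⟨a, b, c, hab, hbc, ?_⟩)
      refine sublist_map_add_of_sublist_blockSum ht fun x hx => ?_
      simp only [mem_cons, not_mem_nil, or_false] at hx
      omega
    · have pair := fun u v (h : [u, v] <+ [c, b, a]) => pair_sublist_blockSum hpos (h.trans ht)
      have := pair c b (by simp)
      have := pair b a (by simp)
      omega
  · obtain ⟨a, b, c, d, hab, hbc, hcd, ht⟩ := containsPat_2413_iff.mp h
    by_cases ha : r + s < a
    · refine h2413 (containsPat_2413_iff.mpr ⟨a, b, c, d, hab, hbc, hcd, ?_⟩)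
      refine sublist_map_add_of_sublist_blockSum ht fun x hx => ?_
      simp only [mem_cons, not_mem_nil, or_false] at hx
      omega
    · have pair := fun u v (h : [u, v] <+ [b, d, a, c]) => pair_sublist_blockSum hpos (h.trans ht)
      have := pair b a (by simp)
      have := pair d a (by simp)
      have := pair d c (by simp)
      have := pair b c (by simp)
      omega
  · obtain ⟨a, b, c, d, hab, hbc, hcd, ht⟩ := containsPat_3142_iff.mp h
    by_cases ha : r + s < a
    · refine h3142 (containsPat_3142_iff.mpr ⟨a, b, c, d, hab, hbc, hcd, ?_⟩)
      refine sublist_map_add_of_sublist_blockSum ht fun x hx => ?_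
      simp only [mem_cons, not_mem_nil, or_false] at hx
      omega
    · have pair := fun u v (h : [u, v] <+ [c, a, d, b]) => pair_sublist_blockSum hpos (h.trans ht)
      have := pair c a (by simp)
      have := pair c b (by simp)
      have := pair d b (by simp)
      have := pair a d (by simp)
      omega

lemma avoidsAll_of_blockSum {r s : ℕ} {ρ : List ℕ} (h : AvoidsAll (blockSum r s ρ)) :
    AvoidsAll ρ := by
  rw [← avoidsAll_map_add_iff (r + s)]
  exact h.sublist (by rw [blockSum_eq]; exact sublist_append_right ..)

lemma blockSum_inj {r s r' s' : ℕ} {ρ ρ' : List ℕ} (hs : 0 < s) (hs' : 0 < s')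
    (h0 : r = 0 → s = 1) (h0' : r' = 0 → s' = 1) (hρ : ∀ x ∈ ρ, 0 < x)
    (h : blockSum r s ρ = blockSum r' s' ρ') : r = r' ∧ s = s' ∧ ρ = ρ' := by
  rw [blockSum_eq_append_one_cons hs, blockSum_eq_append_one_cons hs'] at h
  have h1 : (1 : ℕ) ∉ range' 2 (s - 1) ++ ρ.map (· + (r + s)) := by
    simp only [mem_append, mem_range'_1, mem_map, not_or, not_exists, not_and]
    exact ⟨by omega, fun x hx => by have := hρ x hx; omega⟩
  obtain ⟨hrs, -, hρρ⟩ := (append_cons_inj_of_notMem (by rw [mem_range'_1]; omega) h1).mp h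
  obtain ⟨rfl, hss⟩ := range'_inj.mp hrs
  obtain rfl : s = s' := by
    rcases hss with hr | hss
    · rw [h0 hr, h0' hr]
    · omega
  exact ⟨rfl, rfl, map_injective_iff.mpr (add_left_injective _) (append_cancel_left hρρ)⟩

section Decomposition

variable {n : ℕ} {A C : List ℕ}

lemma pairwise_lt_of_avoids321 (hπ : IsPermList n (A ++ 1 :: C))
    (h321 : AvoidsPat (A ++ 1 :: C) [3, 2, 1]) : A.Pairwise (· < ·) := by
  rw [pairwise_iff_forall_sublist]
  intro u v huv
  have hne : u ≠ v :=
    pairwise_iff_forall_sublist.mp hπ.nodup (huv.trans (sublist_append_left ..))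
  have hv : v ∈ A := huv.subset (by simp)
  have hv1 : 1 < v := by
    have := (hπ.mem_iff).mp (mem_append_left _ hv)
    have : v ≠ 1 := fun h => hπ.one_notMem_left (h ▸ hv)
    omega
  by_contra hle
  refine h321 (containsPat_321_iff.mpr ⟨1, v, u, hv1, by omega, ?_⟩)
  simpa using huv.append (singleton_sublist.mpr (mem_cons_self ..) : [1] <+ 1 :: C)

lemma IsPermList.mem_suffix_iff {r s : ℕ} (hπ : IsPermList n (range' (s + 1) r ++ 1 :: C))
    {x : ℕ} : x ∈ C ↔ 1 < x ∧ x ≤ n ∧ (x ≤ s ∨ r + s < x) := by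
  have hnd := nodup_append.mp hπ.nodup
  constructor
  · intro hx
    have := hπ.mem_iff.mp (mem_append_right _ (mem_cons_of_mem 1 hx))
    have hxA : x ∉ range' (s + 1) r := fun h => hnd.2.2 x h x (mem_cons_of_mem 1 hx) rfl
    have hx1 : x ≠ 1 := fun h => (nodup_cons.mp hnd.2.1).1 (h ▸ hx)
    rw [mem_range'_1] at hxA
    omega
  · intro hx
    have := (hπ.mem_iff (x := x)).mpr (by omega)
    simp only [mem_append, mem_range'_1, mem_cons] at this
    rcases this with h | rfl | h
    · omega
    · omega
    · exact h

/-- If some `u` with `x < u < v` came after the `1`, then `x, v, 1, u` would be a 2413. -/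
lemma cons_eq_range'_of_avoidsAll {x : ℕ} (hπ : IsPermList n (x :: A ++ 1 :: C))
    (hav : AvoidsAll (x :: A ++ 1 :: C)) : x :: A = range' x (A.length + 1) := by
  refine cons_eq_range'_of_pairwise_lt (pairwise_lt_of_avoids321 hπ hav.1)
    fun u v hv hxu huv => ?_
  have hx1 : 1 < x := by
    have := hπ.pos x (by simp)
    have : x ≠ 1 := fun h => hπ.one_notMem_left (h ▸ mem_cons_self ..)
    omega
  have hu : u ∈ x :: A ++ 1 :: C := by
    have := hπ.mem_iff.mp (mem_append_left _ (mem_cons_of_mem x hv))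
    exact hπ.mem_iff.mpr (by omega)
  rcases mem_append.mp hu with hu | hu
  · rcases mem_cons.mp hu with rfl | hu
    · omega
    · exact hu
  · rcases mem_cons.mp hu with rfl | hu
    · omega
    · refine absurd (containsPat_2413_iff.mpr ⟨1, x, u, v, hx1, hxu, huv, ?_⟩) hav.2.1
      simpa using ((cons_sublist_cons.mpr (singleton_sublist.mpr hv)).append
        (cons_sublist_cons.mpr (singleton_sublist.mpr hu)) : [x, v] ++ [1, u] <+ _)

/-- The entries of `C` below `s + 1` come first (else `s + 1, 1, u, v` is a 3142) and increase
(else `s + 1, u, v` is a 321). -/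
lemma exists_eq_range'_append_of_avoidsAll {r s : ℕ} (hr : 0 < r) (hs : 0 < s)
    (hπ : IsPermList n (range' (s + 1) r ++ 1 :: C))
    (hav : AvoidsAll (range' (s + 1) r ++ 1 :: C)) :
    ∃ D, C = range' 2 (s - 1) ++ D ∧ ∀ x ∈ D, r + s < x := by
  have hC_sub : C <+ range' (s + 1) r ++ 1 :: C :=
    (sublist_cons_self 1 C).trans (sublist_append_right ..)
  have hs1 : [s + 1] <+ range' (s + 1) r := singleton_sublist.mpr (mem_range'_1.mpr (by omega))
  have hsn : s < n := by
    have := hπ.mem_iff.mp (hs1.subset (mem_singleton_self _) |> mem_append_left _)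
    omega
  have hsmall_first : ∀ u v, [u, v] <+ C → v < 2 + (s - 1) → u < 2 + (s - 1) := by
    intro u v huv hv
    by_contra hu
    have hu' := hπ.mem_suffix_iff.mp (huv.subset (mem_cons_self ..))
    have hv' := hπ.mem_suffix_iff.mp (huv.subset (by simp : v ∈ [u, v]))
    refine hav.2.2 (containsPat_3142_iff.mpr ⟨1, v, s + 1, u, by omega, by omega, by omega, ?_⟩)
    simpa using hs1.append (huv.cons_cons 1)
  have hsmall_incr : ∀ u v, [u, v] <+ C → u < 2 + (s - 1) → u < v := by
    intro u v huv hu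
    have hne : u ≠ v := pairwise_iff_forall_sublist.mp hπ.nodup (huv.trans hC_sub)
    have hu' := hπ.mem_suffix_iff.mp (huv.subset (mem_cons_self ..))
    by_contra hvu
    refine hav.1 (containsPat_321_iff.mpr ⟨v, u, s + 1, by omega, by omega, ?_⟩)
    simpa using hs1.append (huv.cons 1)
  obtain ⟨D, rfl, hD⟩ := exists_eq_range'_append
    (fun x hx _ => by have := hπ.mem_suffix_iff.mp hx; omega)
    (fun x _ _ => hπ.mem_suffix_iff.mpr (by omega)) hsmall_first hsmall_incr
  refine ⟨D, rfl, fun x hx => ?_⟩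
  have := hD x hx
  have := hπ.mem_suffix_iff.mp (mem_append_right _ hx)
  omega

theorem exists_eq_blockSum_of_avoidsAll {π : List ℕ} (hπ : IsPermList n π) (hn : 0 < n)
    (hav : AvoidsAll π) : ∃ r s ρ, 0 < s ∧ (r = 0 → s = 1) ∧ π = blockSum r s ρ := by
  obtain ⟨A, C, rfl⟩ := append_of_mem (hπ.mem_iff.mpr ⟨one_pos, hn⟩)
  rcases A with _ | ⟨x, A⟩
  · have hC : ∀ x ∈ C, 0 + 1 ≤ x := fun x hx => hπ.pos x (by simp [hx])
    exact ⟨0, 1, _, one_pos, fun _ => rfl, (blockSum_map_sub (r := 0) (D := C) one_pos hC).symm⟩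
  · have hx : 1 < x := by
      have := hπ.pos x (by simp)
      have : x ≠ 1 := fun h => hπ.one_notMem_left (h ▸ mem_cons_self ..)
      omega
    have hA := cons_eq_range'_of_avoidsAll hπ hav
    obtain ⟨s, rfl⟩ : ∃ s, x = s + 1 := ⟨x - 1, by omega⟩
    rw [hA] at hπ hav ⊢
    obtain ⟨D, rfl, hD⟩ :=
      exists_eq_range'_append_of_avoidsAll (Nat.succ_pos _) (by omega) hπ hav
    exact ⟨_, s, _, by omega, fun h => absurd h (Nat.succ_ne_zero _),
      (blockSum_map_sub (by omega) fun x hx => (hD x hx).le).symm⟩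

end Decomposition

abbrev Av (n : ℕ) : Type := {π : List ℕ // IsPermList n π ∧ AvoidsAll π}

instance (n : ℕ) : Finite (Av n) :=
  Set.Finite.to_subtype <| (range' 1 n).permutations.finite_toSet.subset
    fun _ hπ => mem_permutations.mpr hπ.1

def Av.blockSum {k : ℕ} (r s : ℕ) (ρ : Av k) {n : ℕ} (hn : r + s + k = n) : Av n :=
  ⟨_root_.blockSum r s ρ.1, hn ▸ isPermList_blockSum_iff.mpr ρ.2.1,
    avoidsAll_blockSum ρ.2.2 ρ.2.1.pos r s⟩

/-- The parameters of `Av (j + 1)`: `ρ` stands for `1 ⊕ ρ`, and `(k, i, ρ)` for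
`(12⋯(i + 1) ⊖ 12⋯(j - k - i)) ⊕ ρ`. -/
def Decomp (j : ℕ) : Type := Av j ⊕ (Σ k : Fin j, Fin (j - k) × Av k)

def Decomp.toAv {j : ℕ} : Decomp j → Av (j + 1)
  | .inl ρ => ρ.blockSum 0 1 (by omega)
  | .inr ⟨k, i, ρ⟩ => ρ.blockSum (i + 1) (j - k - i) (by have := i.2; omega)

lemma Decomp.toAv_injective (j : ℕ) : Function.Injective (Decomp.toAv (j := j)) := by
  rintro (ρ | ⟨k, i, ρ⟩) (ρ' | ⟨k', i', ρ'⟩) h <;>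
    have h := congrArg Subtype.val h <;> simp only [toAv, Av.blockSum] at h
  · exact congrArg Sum.inl (Subtype.ext (blockSum_inj one_pos one_pos (fun _ => rfl)
      (fun _ => rfl) ρ.2.1.pos h).2.2)
  · have := i'.2
    exact absurd (blockSum_inj one_pos (by omega) (fun _ => rfl) (by omega) ρ.2.1.pos h).1
      (by omega)
  · have := i.2
    exact absurd (blockSum_inj (by omega) one_pos (by omega) (fun _ => rfl) ρ.2.1.pos h).1
      (by omega)
  · have := i.2
    have := i'.2
    obtain ⟨hr, hs, hρ⟩ := blockSum_inj (by omega) (by omega) (by omega) (by omega) ρ.2.1.pos h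
    obtain rfl : k = k' := Fin.ext (by omega)
    obtain rfl : i = i' := Fin.ext (by omega)
    obtain rfl : ρ = ρ' := Subtype.ext hρ
    rfl

lemma Decomp.toAv_surjective (j : ℕ) : Function.Surjective (Decomp.toAv (j := j)) := by
  rintro ⟨π, hπ, hav⟩
  obtain ⟨r, s, ρ, hs, h0, rfl⟩ := exists_eq_blockSum_of_avoidsAll hπ (Nat.succ_pos j) hav
  have hlen : j + 1 = r + s + ρ.length := by
    simpa [blockSum_eq, add_assoc] using hπ.length_eq.symm
  rw [hlen] at hπ
  have hρ : IsPermList ρ.length ρ ∧ AvoidsAll ρ :=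
    ⟨isPermList_blockSum_iff.mp hπ, avoidsAll_of_blockSum hav⟩
  rcases Nat.eq_zero_or_pos r with rfl | hr
  · obtain rfl := h0 rfl
    obtain rfl : j = ρ.length := by omega
    exact ⟨.inl ⟨ρ, hρ⟩, rfl⟩
  · refine ⟨.inr ⟨⟨ρ.length, by omega⟩, ⟨r - 1, show r - 1 < j - ρ.length by omega⟩, ⟨ρ, hρ⟩⟩, Subtype.ext ?_⟩
    change blockSum (r - 1 + 1) (j - ρ.length - (r - 1)) ρ = blockSum r s ρ
    congr 1 <;> omega

lemma card_av_zero : Nat.card (Av 0) = 1 := by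
  have : Unique (Av 0) :=
    { default := ⟨[], Perm.refl _, by
        refine ⟨?_, ?_, ?_⟩ <;> rintro ⟨t, ht, hlen, -⟩ <;> simp [sublist_nil.mp ht] at hlen⟩
      uniq := fun π => Subtype.ext (Perm.eq_nil π.2.1) }
  exact Nat.card_unique

lemma card_av_succ (j : ℕ) :
    Nat.card (Av (j + 1)) = Nat.card (Av j) + ∑ k ∈ Finset.range j, (j - k) * Nat.card (Av k) := by
  rw [← Nat.card_eq_of_bijective _ ⟨Decomp.toAv_injective j, Decomp.toAv_surjective j⟩, Decomp,
    Nat.card_sum, Nat.card_sigma, ← Fin.sum_univ_eq_sum_range (fun k => (j - k) * Nat.card (Av k))]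
  simp [Nat.card_prod]

end

lemma Finset.sum_range_succ_tsub_mul (f : ℕ → ℕ) (j : ℕ) :
    ∑ k ∈ range (j + 1), (j + 1 - k) * f k =
      ∑ k ∈ range j, (j - k) * f k + ∑ k ∈ range (j + 1), f k := by
  rw [← add_zero (∑ k ∈ range j, _), ← zero_mul (f j), ← Nat.sub_self j,
    ← sum_range_succ (fun k => (j - k) * f k), ← sum_add_distrib]
  refine sum_congr rfl fun k hk => ?_
  rw [Nat.sub_add_comm (mem_range_succ_iff.mp hk), add_one_mul]

lemma add_two_mul_eq_of_eq_add_sum {f : ℕ → ℕ}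
    (hf : ∀ j, f (j + 1) = f j + ∑ k ∈ Finset.range j, (j - k) * f k) (j : ℕ) :
    f (j + 3) + 2 * f (j + 1) = 3 * f (j + 2) + f j := by
  have h0 := hf j
  have h1 : f (j + 2) = _ := hf (j + 1)
  have h2 : f (j + 3) = _ := hf (j + 2)
  rw [Finset.sum_range_succ_tsub_mul] at h1 h2
  rw [Finset.sum_range_succ_tsub_mul, Finset.sum_range_succ _ (j + 1)] at h2
  omega

/-- Let `a n` be the number of permutations of `[n]` avoiding 321, 2413 and 3142.
Then `a 1 = 1`, `a 2 = 2`, `a 3 = 5` and `a n = 3 a_{n-1} - 2 a_{n-2} + a_{n-3}` for `n ≥ 4`. -/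
theorem av_count_recurrence (a : ℕ → ℕ)
    (ha : ∀ n, a n = Nat.card {π : List ℕ // IsPermList n π ∧ AvoidsAll π}) :
    a 1 = 1 ∧ a 2 = 2 ∧ a 3 = 5 ∧
      ∀ n, 4 ≤ n → (a n : ℤ) = 3 * a (n - 1) - 2 * a (n - 2) + a (n - 3) := by
  have hrec : ∀ j, a (j + 1) = a j + ∑ k ∈ Finset.range j, (j - k) * a k := by
    simpa only [ha] using card_av_succ
  have h0 : a 0 = 1 := (ha 0).trans card_av_zero
  have h1 : a 1 = 1 := by simpa [h0] using hrec 0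
  have h2 : a 2 = 2 := by simp [hrec 1, h0, h1]
  have h3 : a 3 = 5 := by simp [hrec 2, Finset.sum_range_succ, h0, h1, h2]
  refine ⟨h1, h2, h3, fun n hn => ?_⟩
  obtain ⟨j, rfl⟩ := Nat.exists_eq_add_of_le' hn
  have : a (j + 4) + 2 * a (j + 2) = 3 * a (j + 3) + a (j + 1) :=
    add_two_mul_eq_of_eq_add_sum hrec (j + 1)
  simp only [show j + 4 - 1 = j + 3 by omega, show j + 4 - 2 = j + 2 by omega,
    show j + 4 - 3 = j + 1 by omega]
  omega
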